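/- arXiv:math/0202040 — 2 statements merged into one kernel-verified Lean document; each statement's English description precedes it below -/
import Mathlib

section
/- Let K be a field of characteristic 0 and let (U,·,ω) be a strong n-Lie-Poisson algebra over K. Define the alternating (n+1)-linear map ω̃ = id∧ω by ω̃(u_0,u_1,...,u_n) = Σ_{i=0}^n (−1)^i u_i·ω(u_0,...,û_i,...,u_n). Then: (1) ω̃ satisfies the Fundamental Identity of type I for (n+1)-ary multiplications, i.e. (U,ω̃) is an (n+1)-Lie algebra; (2) f^{ω̃} = 0; and (3) if U has a unit 1, then ω̃(u·u',u_1,...,u_n) − u·ω̃(u',u_1,...,u_n) − u'·ω̃(u,u_1,...,u_n) = −(u·u')·ω̃(1,u_1,...,u_n) for all u,u',u_1,...,u_n ∈ U. -/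
open Finset

/-- `ω` is an `m`-linear map over `K`. -/
def IsMultilinear (K : Type*) [Field K] {U : Type*} [CommRing U] [Algebra K U] {m : ℕ}
    (ω : (Fin m → U) → U) : Prop :=
  ∀ (v : Fin m → U) (i : Fin m) (c : K) (x y : U),
    ω (Function.update v i (c • x + y)) =
      c • ω (Function.update v i x) + ω (Function.update v i y)

/-- `ω` is alternating: it vanishes whenever two arguments coincide. -/
def IsAlternating {U : Type*} [CommRing U] {m : ℕ} (ω : (Fin m → U) → U) : Prop :=
  ∀ (v : Fin m → U) (i j : Fin m), i ≠ j → v i = v j → ω v = 0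

/-- Fundamental Identity of type I for an `(n+1)`-ary multiplication. -/
def FundamentalIdentityI {U : Type*} [CommRing U] {n : ℕ} (ω : (Fin (n + 1) → U) → U) : Prop :=
  ∀ (u : Fin n → U) (v : Fin (n + 1) → U),
    ω (Fin.snoc u (ω v)) =
      ∑ i : Fin (n + 1), ω (Function.update v i (ω (Fin.snoc u (v i))))

/-- The Leibniz rule relating an `(n+1)`-ary multiplication with the associative product. -/
def LeibnizRule {U : Type*} [CommRing U] {n : ℕ} (ω : (Fin (n + 1) → U) → U) : Prop :=
  ∀ (a b : U) (u : Fin n → U),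
    ω (Fin.cons (a * b) u) = a * ω (Fin.cons b u) + b * ω (Fin.cons a u)

/-- The polynomial `f^ω(u_1,…,u_n, v_1,…,v_{n+2})` for an `(n+1)`-ary multiplication `ω`. -/
def fPoly {U : Type*} [CommRing U] {n : ℕ} (ω : (Fin (n + 1) → U) → U)
    (u : Fin n → U) (v : Fin (n + 2) → U) : U :=
  ∑ i : Fin (n + 2), (-1 : U) ^ ((i : ℕ) + 1) * (ω (Fin.snoc u (v i)) * ω (i.removeNth v))

/-- The `(n+2)`-ary multiplication `id ∧ ω`:
`(id∧ω)(u_0,…,u_{n+1}) = Σ_i (−1)^i u_i·ω(u_0,…,û_i,…,u_{n+1})`. -/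
def idWedge {U : Type*} [CommRing U] {n : ℕ} (ω : (Fin (n + 1) → U) → U)
    (u : Fin (n + 2) → U) : U :=
  ∑ i : Fin (n + 2), (-1 : U) ^ (i : ℕ) * (u i * ω (i.removeNth u))


/-!
Write `(D ∧ Ω)(v) = Σ_i (-1)^i D(v_i) Ω(v̂_i)`, so that `ω̃ = id ∧ ω` and `f^ω(u, ·) = -(ω(u, ·) ∧ ω)`.
Iterated wedges anticommute, `E ∧ (D ∧ Ω) = -(D ∧ (E ∧ Ω))`, and `D ∧ (D ∧ Ω) = 0`: in the double sum
the two orders of removing the same pair of arguments cancel.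

Put `q_j = (u_1, …, û_j, …, u_{n+1})` and `δ_j = ω(q_j, ·)`. Then
`ω̃(u, x) = (-1)^{n+1} ω(u) x + Σ_j (-1)^j u_j δ_j(x)`. Each `δ_j` is a derivation of the product
(Leibniz rule) and of `ω` (Fundamental Identity), and strongness says `δ_j ∧ ω = 0`. So (2) follows
because wedges anticommute. For (1), look at how far an operator is from being a derivation of `ω̃`.
Multiplication by `c` misses by `-(n+1) c ω̃`, and `a δ_j` misses by `-δ_j(a) ω̃`. These cancel because
`δ_j(u_j) = (-1)^{n+j} ω(u)`. (3) is the Leibniz rule in the first slot together with `ω(1, …) = 0`.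
-/

open Function

section Tuples

variable {α : Type*} {m : ℕ}

theorem Fin.removeNth_castSucc_snoc (j : Fin (m + 1)) (w : Fin (m + 1) → α) (a : α) :
    j.castSucc.removeNth (Fin.snoc w a : Fin (m + 2) → α) = Fin.snoc (j.removeNth w) a := by
  ext b
  refine Fin.lastCases ?_ (fun b => ?_) b
  · simp [Fin.removeNth_apply]
  · simp [Fin.removeNth_apply, Fin.castSucc_succAbove_castSucc]

theorem Fin.removeNth_succ_cons (j : Fin (m + 1)) (a : α) (w : Fin (m + 1) → α) :
    j.succ.removeNth (Fin.cons a w : Fin (m + 2) → α) = Fin.cons a (j.removeNth w) :=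
  Fin.cons_comp_succ_succAbove a w j

end Tuples

section Wedge

variable {U : Type*} [CommRing U] {m : ℕ}

/-- `D ∧ Ω`; thus `idWedge ω = wedge ω id`. -/
def wedge (Ω : (Fin m → U) → U) (D : U → U) (v : Fin (m + 1) → U) : U :=
  ∑ i : Fin (m + 1), (-1 : U) ^ (i : ℕ) * (D (v i) * Ω (i.removeNth v))

/-- Vanishes for all `w` iff `D` is a derivation of the `m`-ary operation `Ω`. -/
def derivDefect (Ω : (Fin m → U) → U) (D : U → U) (w : Fin m → U) : U :=
  D (Ω w) - ∑ s, Ω (update w s (D (w s)))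

theorem wedge_mul_left (c : U) (F : (Fin m → U) → U) (D : U → U) (v : Fin (m + 1) → U) :
    wedge (fun w => c * F w) D v = c * wedge F D v := by
  simp only [wedge, Finset.mul_sum]
  exact Finset.sum_congr rfl fun _ _ => by ring

theorem wedge_mul_right (c : U) (Ω : (Fin m → U) → U) (D : U → U) (v : Fin (m + 1) → U) :
    wedge Ω (fun x => c * D x) v = c * wedge Ω D v := by
  simp only [wedge, Finset.mul_sum]
  exact Finset.sum_congr rfl fun _ _ => by ring

theorem wedge_add_left (F G : (Fin m → U) → U) (D : U → U) (v : Fin (m + 1) → U) :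
    wedge (fun w => F w + G w) D v = wedge F D v + wedge G D v := by
  simp only [wedge, mul_add, Finset.sum_add_distrib]

theorem wedge_sub_left (F G : (Fin m → U) → U) (D : U → U) (v : Fin (m + 1) → U) :
    wedge (fun w => F w - G w) D v = wedge F D v - wedge G D v := by
  simp only [wedge, mul_sub, Finset.sum_sub_distrib]

theorem wedge_zero_left (D : U → U) (v : Fin (m + 1) → U) :
    wedge (fun _ : Fin m → U => 0) D v = 0 := by
  simp [wedge]

theorem wedge_mul_add_sum {ι : Type*} (Ω : (Fin m → U) → U) (c : U) (s : Finset ι) (a : ι → U)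
    (D : ι → U → U) (v : Fin (m + 1) → U) :
    wedge Ω (fun x => c * x + ∑ j ∈ s, a j * D j x) v =
      c * wedge Ω id v + ∑ j ∈ s, a j * wedge Ω (D j) v := by
  simp only [wedge, add_mul, mul_add, Finset.sum_add_distrib, Finset.sum_mul, Finset.mul_sum, id]
  rw [Finset.sum_comm (s := s)]
  congr 1 <;> refine Finset.sum_congr rfl fun _ _ => ?_
  · ring
  · exact Finset.sum_congr rfl fun _ _ => by ring

/-- The pairs `(k, s)` and `(k.succAbove s, s.predAbove k)` remove the same two entries of `v`,
with opposite signs. -/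
theorem sum_sum_neg_one_pow_removeNth_removeNth_eq_zero {α : Type*}
    (F : α → α → (Fin m → α) → U) (hF : ∀ x y w, F x y w = F y x w) (v : Fin (m + 2) → α) :
    ∑ k : Fin (m + 2), ∑ s : Fin (m + 1),
      (-1 : U) ^ ((k : ℕ) + s) * F (v k) (k.removeNth v s) (s.removeNth (k.removeNth v)) = 0 := by
  rw [← Finset.sum_product']
  refine Finset.sum_ninvolution (fun p => (p.1.succAbove p.2, p.2.predAbove p.1))
    (fun ⟨k, s⟩ => ?_)
    (fun ⟨k, s⟩ _ h => Fin.succAbove_ne k s (by simpa using congrArg Prod.fst h))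
    (fun _ => Finset.mem_univ _) (fun ⟨k, s⟩ => ?_)
  · simp only [Fin.removeNth_apply, Fin.succAbove_succAbove_predAbove]
    rw [← Fin.removeNth_removeNth_eq_swap, Fin.neg_one_pow_succAbove_add_predAbove, hF]
    simp
  · simp [Fin.succAbove_succAbove_predAbove, Fin.predAbove_predAbove_succAbove]

theorem wedge_wedge (Ω : (Fin m → U) → U) (D E : U → U) (v : Fin (m + 2) → U) :
    wedge (wedge Ω D) E v = ∑ k : Fin (m + 2), ∑ s : Fin (m + 1), (-1 : U) ^ ((k : ℕ) + s) *
      (E (v k) * D (k.removeNth v s) * Ω (s.removeNth (k.removeNth v))) := by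
  simp only [wedge, Finset.mul_sum]
  refine Finset.sum_congr rfl fun k _ => Finset.sum_congr rfl fun s _ => ?_
  ring

theorem wedge_wedge_self (Ω : (Fin m → U) → U) (D : U → U) (v : Fin (m + 2) → U) :
    wedge (wedge Ω D) D v = 0 := by
  rw [wedge_wedge]
  exact sum_sum_neg_one_pow_removeNth_removeNth_eq_zero (fun x y w => D x * D y * Ω w)
    (fun x y w => by ring) v

theorem wedge_wedge_comm (Ω : (Fin m → U) → U) (D E : U → U) (v : Fin (m + 2) → U) :
    wedge (wedge Ω D) E v = -wedge (wedge Ω E) D v := by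
  rw [eq_neg_iff_add_eq_zero, wedge_wedge, wedge_wedge, ← Finset.sum_add_distrib]
  simp_rw [← Finset.sum_add_distrib, ← mul_add]
  exact sum_sum_neg_one_pow_removeNth_removeNth_eq_zero
    (fun x y w => E x * D y * Ω w + D x * E y * Ω w) (fun x y w => by ring) v

theorem wedge_snoc (Ω : (Fin (m + 1) → U) → U) (D : U → U) (w : Fin (m + 1) → U) (a : U) :
    wedge Ω D (Fin.snoc w a) = (-1) ^ (m + 1) * Ω w * D a +
      ∑ j : Fin (m + 1), (-1) ^ (j : ℕ) * D (w j) * Ω (Fin.snoc (j.removeNth w) a) := by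
  rw [wedge, Fin.sum_univ_castSucc, add_comm]
  simp only [Fin.snoc_castSucc, Fin.snoc_last, Fin.val_castSucc, Fin.val_last,
    Fin.removeNth_castSucc_snoc, Fin.removeNth_last, Fin.init_snoc]
  congr 1
  · ring
  · exact Finset.sum_congr rfl fun j _ => by ring

theorem wedge_cons (Ω : (Fin (m + 1) → U) → U) (D : U → U) (a : U) (w : Fin (m + 1) → U) :
    wedge Ω D (Fin.cons a w) = D a * Ω w - wedge (fun q => Ω (Fin.cons a q)) D w := by
  rw [wedge, Fin.sum_univ_succ, wedge, sub_eq_add_neg, ← Finset.sum_neg_distrib]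
  simp [Fin.removeNth_succ_cons, pow_succ]

theorem fPoly_eq_neg_wedge (Ω : (Fin (m + 1) → U) → U) (u : Fin m → U) (v : Fin (m + 2) → U) :
    fPoly Ω u v = -wedge Ω (fun x => Ω (Fin.snoc u x)) v := by
  simp [fPoly, wedge, pow_succ, ← Finset.sum_neg_distrib]

theorem fundamentalIdentityI_iff (Ω : (Fin (m + 1) → U) → U) :
    FundamentalIdentityI Ω ↔ ∀ u w, derivDefect Ω (fun x => Ω (Fin.snoc u x)) w = 0 := by
  simp [FundamentalIdentityI, derivDefect, sub_eq_zero]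

theorem sum_update_wedge_id (Ω : (Fin m → U) → U) (D : U → U) (v : Fin (m + 1) → U) :
    ∑ i, wedge Ω id (update v i (D (v i))) =
      wedge Ω D v + wedge (fun w => ∑ s, Ω (update w s (D (w s)))) id v := by
  simp only [wedge, Finset.mul_sum]
  rw [Finset.sum_comm, ← Finset.sum_add_distrib]
  refine Finset.sum_congr rfl fun k _ => ?_
  rw [Fin.sum_univ_succAbove _ k]
  congr 1
  · simp
  · refine Finset.sum_congr rfl fun s _ => ?_
    simp [Fin.removeNth_apply, (Fin.succAbove_ne k s).symm]

theorem derivDefect_wedge_id (Ω : (Fin m → U) → U) (D : U → U) (v : Fin (m + 1) → U) :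
    derivDefect (wedge Ω id) D v = D (wedge Ω id v) - wedge Ω D v -
      wedge (fun w => D (Ω w)) id v + wedge (derivDefect Ω D) id v := by
  rw [derivDefect, sum_update_wedge_id]
  simp only [wedge, derivDefect, mul_sub, Finset.sum_sub_distrib]
  ring

variable {R : Type*} [CommRing R] [Algebra R U]

theorem Derivation.map_neg_one_pow_mul (δ : Derivation R U U) (k : ℕ) (x : U) :
    δ ((-1) ^ k * x) = (-1) ^ k * δ x := by
  simp [Derivation.leibniz]

theorem Derivation.map_wedge_id (δ : Derivation R U U) (Ω : (Fin m → U) → U)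
    (v : Fin (m + 1) → U) :
    δ (wedge Ω id v) = wedge Ω δ v + wedge (fun w => δ (Ω w)) id v := by
  simp only [wedge, map_sum, δ.map_neg_one_pow_mul, ← Finset.sum_add_distrib, id,
    Derivation.leibniz, smul_eq_mul]
  exact Finset.sum_congr rfl fun _ _ => by ring

end Wedge

namespace AlternatingMap

variable {R U : Type*} [CommRing R] [CommRing U] [Algebra R U] {m : ℕ}

theorem map_update_eq_cons (Ω : U [⋀^Fin (m + 1)]→ₗ[R] U) (w : Fin (m + 1) → U)
    (l : Fin (m + 1)) (x : U) :
    Ω (update w l x) = (-1) ^ (l : ℕ) * Ω (Fin.cons x (l.removeNth w)) := by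
  rw [← Fin.insertNth_removeNth, Ω.map_insertNth]
  simp [Matrix.vecCons]

theorem map_snoc_eq_cons (Ω : U [⋀^Fin (m + 1)]→ₗ[R] U) (q : Fin m → U) (x : U) :
    Ω (Fin.snoc q x) = (-1) ^ m * Ω (Fin.cons x q) := by
  rw [← Fin.insertNth_last', Ω.map_insertNth]
  simp [Matrix.vecCons]

theorem neg_one_pow_mul_map_snoc_removeNth (Ω : U [⋀^Fin (m + 1)]→ₗ[R] U)
    (u : Fin (m + 1) → U) (j : Fin (m + 1)) :
    (-1) ^ (j : ℕ) * Ω (Fin.snoc (j.removeNth u) (u j)) = (-1) ^ m * Ω u := by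
  conv_rhs => rw [← update_eq_self j u, map_update_eq_cons]
  rw [map_snoc_eq_cons]
  ring

theorem sum_mul_map_update (Ω : U [⋀^Fin (m + 1)]→ₗ[R] U) (D : U → U) (a : U)
    (w : Fin (m + 1) → U) :
    ∑ s, D (w s) * Ω (update w s a) = wedge (fun q => Ω (Fin.cons a q)) D w := by
  simp only [wedge, map_update_eq_cons]
  exact Finset.sum_congr rfl fun s _ => by ring

theorem map_update_mul (Ω : U [⋀^Fin (m + 1)]→ₗ[R] U) (hL : LeibnizRule ⇑Ω)
    (w : Fin (m + 1) → U) (l : Fin (m + 1)) (a b : U) :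
    Ω (update w l (a * b)) = a * Ω (update w l b) + b * Ω (update w l a) := by
  simp only [map_update_eq_cons, hL a b]
  ring

theorem derivDefect_add_sum {ι : Type*} (Ω : U [⋀^Fin m]→ₗ[R] U) (D₀ : U → U) (s : Finset ι)
    (D : ι → U → U) (w : Fin m → U) :
    derivDefect Ω (fun x => D₀ x + ∑ j ∈ s, D j x) w =
      derivDefect Ω D₀ w + ∑ j ∈ s, derivDefect Ω (D j) w := by
  simp only [derivDefect, Ω.map_update_add, Ω.map_update_sum, Finset.sum_add_distrib,
    Finset.sum_sub_distrib]
  rw [Finset.sum_comm (s := s)]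
  ring

def snocDerivation (Ω : U [⋀^Fin (m + 1)]→ₗ[R] U) (hL : LeibnizRule ⇑Ω) (q : Fin m → U) :
    Derivation R U U :=
  Derivation.mk' (Ω.toMultilinearMap.toLinearMap (Fin.snoc q 0) (Fin.last m)) fun a b => by
    simp only [MultilinearMap.toLinearMap_apply, coe_multilinearMap, Fin.update_snoc_last,
      map_snoc_eq_cons, hL a b, smul_eq_mul]
    ring

@[simp]
theorem coe_snocDerivation (Ω : U [⋀^Fin (m + 1)]→ₗ[R] U) (hL : LeibnizRule ⇑Ω)
    (q : Fin m → U) :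
    ⇑(snocDerivation Ω hL q) = fun x => Ω (Fin.snoc q x) := by
  ext x
  simp [snocDerivation, Fin.update_snoc_last]

def wedgeId (Ω : U [⋀^Fin m]→ₗ[R] U) : U [⋀^Fin (m + 1)]→ₗ[R] U :=
  alternatizeUncurryFin
    { toFun := fun x => (LinearMap.mulLeft R x).compAlternatingMap Ω
      map_add' := fun x y => by ext; simp [add_mul]
      map_smul' := fun r x => by ext; simp }

@[simp]
theorem coe_wedgeId (Ω : U [⋀^Fin m]→ₗ[R] U) : ⇑(wedgeId Ω) = wedge Ω id := by
  ext v
  simp [wedgeId, alternatizeUncurryFin_apply, wedge]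

end AlternatingMap

def IsMultilinear.toAlternatingMap {K U : Type*} [Field K] [CommRing U] [Algebra K U] {m : ℕ}
    {ω : (Fin m → U) → U} (hml : IsMultilinear K ω) (halt : IsAlternating ω) :
    U [⋀^Fin m]→ₗ[K] U where
  toFun := ω
  map_update_add' := by
    intro _ v i x y
    obtain rfl : ‹DecidableEq (Fin m)› = instDecidableEqFin m := Subsingleton.elim _ _
    simpa using hml v i 1 x y
  map_update_smul' := by
    intro _ v i c x
    obtain rfl : ‹DecidableEq (Fin m)› = instDecidableEqFin m := Subsingleton.elim _ _
    have h0 : ω (update v i 0) = 0 := by simpa using hml v i 1 0 0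
    simpa [h0] using hml v i c x 0
  map_eq_zero_of_eq' v i j hv hij := halt v i j hij hv

section Defects

variable {R U : Type*} [CommRing R] [CommRing U] [Algebra R U] {m : ℕ}

theorem derivDefect_wedge_id_mul_left (Ω : U [⋀^Fin (m + 1)]→ₗ[R] U) (hL : LeibnizRule ⇑Ω)
    (c : U) (v : Fin (m + 2) → U) :
    derivDefect (wedge Ω id) (fun x => c * x) v = -((m + 1) * c * wedge Ω id v) := by
  have hΩ : ∀ w, derivDefect Ω (fun x => c * x) w =
      -(m * c) * Ω w - wedge (fun q => Ω (Fin.cons c q)) id w := by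
    intro w
    have hρ := Ω.sum_mul_map_update id c w
    simp only [id_eq] at hρ
    simp only [derivDefect, Ω.map_update_mul hL, update_eq_self, Finset.sum_add_distrib,
      Finset.sum_const, Finset.card_univ, Fintype.card_fin, nsmul_eq_mul, hρ]
    push_cast
    ring
  have hc : wedge Ω (fun x => c * x) v = c * wedge Ω id v := wedge_mul_right c Ω id v
  rw [derivDefect_wedge_id, funext hΩ, wedge_sub_left, wedge_mul_left, wedge_wedge_self,
    wedge_mul_left, hc]
  ring

theorem derivDefect_wedge_id_mul_derivation (Ω : U [⋀^Fin (m + 1)]→ₗ[R] U)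
    (hL : LeibnizRule ⇑Ω) (δ : Derivation R U U) (hδ : ∀ w, derivDefect Ω δ w = 0)
    (hδΩ : ∀ v, wedge Ω δ v = 0) (a : U) (v : Fin (m + 2) → U) :
    derivDefect (wedge Ω id) (fun x => a * δ x) v = -(δ a * wedge Ω id v) := by
  have hΩ : ∀ w, derivDefect Ω (fun x => a * δ x) w = -δ a * Ω w := by
    intro w
    have hpair : ∑ s, δ (w s) * Ω (update w s a) = δ a * Ω w := by
      rw [Ω.sum_mul_map_update, eq_comm, ← sub_eq_zero, ← hδΩ (Fin.cons a w), wedge_cons]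
    have h := hδ w
    simp only [derivDefect, Ω.map_update_mul hL, Finset.sum_add_distrib, ← Finset.mul_sum,
      hpair] at h ⊢
    linear_combination a * h
  rw [derivDefect_wedge_id, funext hΩ, wedge_mul_left, wedge_mul_left, wedge_mul_right a Ω δ,
    δ.map_wedge_id]
  ring

end Defects

section Parts

variable {U : Type*} [CommRing U] {n : ℕ}

theorem fundamentalIdentityI_wedge_id {R : Type*} [CommRing R] [Algebra R U]
    (Ω : U [⋀^Fin (n + 1)]→ₗ[R] U) (hFI : FundamentalIdentityI ⇑Ω) (hL : LeibnizRule ⇑Ω)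
    (hstrong : ∀ u v, fPoly ⇑Ω u v = 0) :
    FundamentalIdentityI (wedge Ω id) := by
  rw [fundamentalIdentityI_iff]
  intro u v
  set δ : Fin (n + 1) → Derivation R U U := fun j => Ω.snocDerivation hL (j.removeNth u)
  have hD : (fun x => wedge Ω id (Fin.snoc u x)) =
      fun x => (-1) ^ (n + 1) * Ω u * x + ∑ j : Fin (n + 1), (-1) ^ (j : ℕ) * u j * δ j x := by
    funext x
    simp [wedge_snoc, δ]
  have hδ : ∀ j w, derivDefect Ω (δ j) w = 0 := fun j => by
    simpa [δ] using (fundamentalIdentityI_iff _).mp hFI (j.removeNth u)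
  have hδΩ : ∀ j v, wedge Ω (δ j) v = 0 := fun j v => by
    simpa [δ, fPoly_eq_neg_wedge] using hstrong (j.removeNth u) v
  have hδu : ∀ j : Fin (n + 1), δ j ((-1) ^ (j : ℕ) * u j) = (-1) ^ n * Ω u := fun j => by
    simp only [Derivation.map_neg_one_pow_mul, δ, AlternatingMap.coe_snocDerivation,
      Ω.neg_one_pow_mul_map_snoc_removeNth]
  rw [hD, ← Ω.coe_wedgeId, Ω.wedgeId.derivDefect_add_sum, Ω.coe_wedgeId,
    derivDefect_wedge_id_mul_left Ω hL]
  simp only [derivDefect_wedge_id_mul_derivation Ω hL (δ _) (hδ _) (hδΩ _), hδu,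
    Finset.sum_neg_distrib, Finset.sum_const, Finset.card_univ, Fintype.card_fin, nsmul_eq_mul]
  push_cast
  ring

theorem fPoly_wedge_id_eq_zero {ω : (Fin (n + 1) → U) → U} (hstrong : ∀ u v, fPoly ω u v = 0)
    (u : Fin (n + 1) → U) (v : Fin (n + 3) → U) : fPoly (wedge ω id) u v = 0 := by
  have hD : (fun x => wedge ω id (Fin.snoc u x)) = fun x => (-1) ^ (n + 1) * ω u * x +
      ∑ j : Fin (n + 1), (-1) ^ (j : ℕ) * u j * ω (Fin.snoc (j.removeNth u) x) :=
    funext fun x => wedge_snoc ω id u x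
  have hδ : ∀ q, wedge (wedge ω id) (fun x => ω (Fin.snoc q x)) v = 0 := by
    intro q
    have hq : wedge ω (fun x => ω (Fin.snoc q x)) = fun _ => 0 :=
      funext fun w => by rw [← neg_eq_zero, ← fPoly_eq_neg_wedge, hstrong]
    rw [wedge_wedge_comm, hq, wedge_zero_left, neg_zero]
  rw [fPoly_eq_neg_wedge, hD, wedge_mul_add_sum, wedge_wedge_self]
  simp [hδ]

theorem wedge_id_cons_mul {ω : (Fin (n + 1) → U) → U} (hL : LeibnizRule ω) (a b : U)
    (u : Fin (n + 1) → U) :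
    wedge ω id (Fin.cons (a * b) u) - a * wedge ω id (Fin.cons b u) -
        b * wedge ω id (Fin.cons a u) = -((a * b) * wedge ω id (Fin.cons 1 u)) := by
  have hab : (fun q => ω (Fin.cons (a * b) q)) =
      fun q => a * ω (Fin.cons b q) + b * ω (Fin.cons a q) := funext (hL a b)
  have h1 : (fun q => ω (Fin.cons 1 q)) = fun _ => 0 :=
    funext fun q => by simpa using hL 1 1 q
  simp only [wedge_cons, hab, h1, wedge_add_left, wedge_mul_left, wedge_zero_left, id]
  ring

end Parts

theorem idWedge_strong_LiePoisson_general {K : Type*} [Field K]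
    {U : Type*} [CommRing U] [Algebra K U] {n : ℕ}
    (ω : (Fin (n + 1) → U) → U)
    (hml : IsMultilinear K ω) (halt : IsAlternating ω)
    (hFI : FundamentalIdentityI ω) (hLeib : LeibnizRule ω)
    (hstrong : ∀ (u : Fin n → U) (v : Fin (n + 2) → U), fPoly ω u v = 0) :
    FundamentalIdentityI (idWedge ω) ∧
      (∀ (u : Fin (n + 1) → U) (v : Fin (n + 3) → U), fPoly (idWedge ω) u v = 0) ∧
      (∀ (a b : U) (u : Fin (n + 1) → U),
        idWedge ω (Fin.cons (a * b) u) - a * idWedge ω (Fin.cons b u)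
            - b * idWedge ω (Fin.cons a u) =
          -((a * b) * idWedge ω (Fin.cons 1 u))) :=
  ⟨fundamentalIdentityI_wedge_id (hml.toAlternatingMap halt) hFI hLeib hstrong,
    fPoly_wedge_id_eq_zero hstrong, wedge_id_cons_mul hLeib⟩

/-- If `(U,·,ω)` is a strong `(n+1)`-Lie-Poisson algebra over a field of characteristic `0`,
then `ω̃ = id ∧ ω` satisfies: (1) the Fundamental Identity of type I, so `(U,ω̃)` is an
`(n+2)`-Lie algebra; (2) `f^{ω̃} = 0`; (3) the unit identity
`ω̃(u·u',u_1,…) − u·ω̃(u',u_1,…) − u'·ω̃(u,u_1,…) = −(u·u')·ω̃(1,u_1,…)`. -/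
theorem idWedge_strong_LiePoisson {K : Type*} [Field K] [CharZero K]
    {U : Type*} [CommRing U] [Algebra K U] {n : ℕ}
    (ω : (Fin (n + 1) → U) → U)
    (hml : IsMultilinear K ω) (halt : IsAlternating ω)
    (hFI : FundamentalIdentityI ω) (hLeib : LeibnizRule ω)
    (hstrong : ∀ (u : Fin n → U) (v : Fin (n + 2) → U), fPoly ω u v = 0) :
    FundamentalIdentityI (idWedge ω) ∧
      (∀ (u : Fin (n + 1) → U) (v : Fin (n + 3) → U), fPoly (idWedge ω) u v = 0) ∧
      (∀ (a b : U) (u : Fin (n + 1) → U),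
        idWedge ω (Fin.cons (a * b) u) - a * idWedge ω (Fin.cons b u)
            - b * idWedge ω (Fin.cons a u) =
          -((a * b) * idWedge ω (Fin.cons 1 u))) :=
  idWedge_strong_LiePoisson_general ω hml halt hFI hLeib hstrong
end

section
/- Let K be a field of characteristic 0, n ≥ 2, and K_n = K[x_1^{±1},...,x_n^{±1}] the Laurent polynomial algebra. The K-linear map Δ : K_n → K_n defined by Δ(u) = Σ_{i=1}^n x_i·∂_i(u) + (n/(1−n))·u is a derivation of the n-Lie algebra (K_n, Jac_n^S), i.e. Δ(Jac_n^S(u_1,...,u_n)) = Σ_{l=1}^n Jac_n^S(u_1,...,u_{l−1}, Δ(u_l), u_{l+1},...,u_n) for all u_1,...,u_n ∈ K_n. -/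
/-! Both sides are multilinear in `u`, since `Δ` and every `∂_i` are `K`-linear, so it suffices
to compare them on monomials. `Δ` acts on `x^α` by the scalar `|α| + c`, where `|α| = Σ_i α_i`
and `c = n/(1−n)`, and `Jac(x^{v_1},…,x^{v_n}) = det(v_j(i)) · x^{v_1+⋯+v_n−(1,…,1)}`, so the
identity reduces to `|v_1| + ⋯ + |v_n| − n + c = Σ_l (|v_l| + c)`, i.e. to `c (1 − n) = n`. -/

open Finset

/-- The Laurent polynomial algebra `K[x_1^{±1},…,x_n^{±1}]`, realized as the group algebra
of `ℤ^n` over `K`. -/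
abbrev Laurent (K : Type*) [Field K] (n : ℕ) : Type _ := AddMonoidAlgebra K (Fin n → ℤ)

/-- The monomial `x^α`. -/
noncomputable def lmon {K : Type*} [Field K] {n : ℕ} (α : Fin n → ℤ) : Laurent K n :=
  AddMonoidAlgebra.single α 1

/-- The partial derivative `∂_i`, with `∂_i(x^α) = α_i x^{α − ε_i}`. -/
noncomputable def lpd {K : Type*} [Field K] {n : ℕ} (i : Fin n) (u : Laurent K n) :
    Laurent K n :=
  Finsupp.sum u.coeff fun α c => AddMonoidAlgebra.single (α - Pi.single i 1) ((α i : K) * c)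

/-- The Jacobian `Jac_n^S(u_1,…,u_n) = det(∂_i u_j)` on Laurent polynomials. -/
noncomputable def ljac {K : Type*} [Field K] {n : ℕ} (u : Fin n → Laurent K n) : Laurent K n :=
  Matrix.det (Matrix.of fun i j => lpd i (u j))

/-- The linear map `Δ(u) = Σ_i x_i·∂_i(u) + (n/(1−n))·u` on Laurent polynomials. -/
noncomputable def lDelta {K : Type*} [Field K] {n : ℕ} (u : Laurent K n) : Laurent K n :=
  (∑ i : Fin n, lmon (Pi.single i 1) * lpd i u) + ((n : K) / (1 - (n : K))) • u

namespace MultilinearMap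

variable {R ι M N : Type*} [CommSemiring R] [AddCommMonoid M] [Module R M] [AddCommMonoid N]
  [Module R N] [Fintype ι] [DecidableEq ι]

theorem sum_compLinearMap_update_apply (f : MultilinearMap R (fun _ : ι => M) N)
    (D : M →ₗ[R] M) (u : ι → M) :
    (∑ l, f.compLinearMap (Function.update (fun _ => LinearMap.id) l D)) u =
      ∑ l, f (Function.update u l (D (u l))) := by
  simp only [_root_.sum_apply, compLinearMap_apply]
  refine Finset.sum_congr rfl fun l _ => congrArg f (funext fun i => ?_)
  rcases eq_or_ne i l with rfl | h
  · simp
  · simp [Function.update_of_ne h]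

end MultilinearMap

section Laurent

variable {K : Type*} [Field K] {n : ℕ}

noncomputable def lbasis : Module.Basis (Fin n → ℤ) K (Laurent K n) :=
  AddMonoidAlgebra.basis _ K

theorem lbasis_apply (α : Fin n → ℤ) : (lbasis α : Laurent K n) = lmon α := rfl

noncomputable def lpdLinear (i : Fin n) : Laurent K n →ₗ[K] Laurent K n :=
  lbasis.constr K fun α => (α i : K) • lmon (α - Pi.single i 1)

theorem lpdLinear_apply (i : Fin n) (u : Laurent K n) : lpdLinear i u = lpd i u := by
  rw [lpdLinear, Module.Basis.constr_apply, lpd]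
  refine Finsupp.sum_congr fun α _ => ?_
  rw [lmon, smul_smul, AddMonoidAlgebra.smul_single', mul_one, mul_comm]

noncomputable def lDeltaLinear : Laurent K n →ₗ[K] Laurent K n :=
  ∑ i : Fin n, LinearMap.mulLeft K (lmon (Pi.single i 1)) ∘ₗ lpdLinear i +
    ((n : K) / (1 - n)) • LinearMap.id

theorem lDeltaLinear_apply (u : Laurent K n) : lDeltaLinear u = lDelta u := by
  simp [lDeltaLinear, lDelta, lpdLinear_apply, LinearMap.sum_apply]

noncomputable def ljacMultilinear :
    MultilinearMap K (fun _ : Fin n => Laurent K n) (Laurent K n) :=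
  ((Matrix.detRowAlternating : (Fin n → Laurent K n) [⋀^Fin n]→ₗ[Laurent K n] Laurent K n)
    |>.toMultilinearMap.restrictScalars K).compLinearMap fun _ => LinearMap.pi lpdLinear

theorem ljacMultilinear_apply (u : Fin n → Laurent K n) : ljacMultilinear u = ljac u := by
  rw [ljac, ← Matrix.det_transpose]
  simp only [ljacMultilinear, MultilinearMap.compLinearMap_apply,
    MultilinearMap.coe_restrictScalars, AlternatingMap.coe_multilinearMap]
  congr 1
  ext j i
  simp [lpdLinear_apply]

theorem lmon_mul (α β : Fin n → ℤ) : (lmon α * lmon β : Laurent K n) = lmon (α + β) := by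
  simp [lmon, AddMonoidAlgebra.single_mul_single]

theorem lpd_lmon (i : Fin n) (α : Fin n → ℤ) :
    lpd i (lmon α : Laurent K n) = (α i : K) • lmon (α - Pi.single i 1) := by
  rw [← lpdLinear_apply, lpdLinear, ← lbasis_apply, Module.Basis.constr_basis]

theorem lDelta_lmon (α : Fin n → ℤ) :
    lDelta (lmon α : Laurent K n) = (∑ i, (α i : K) + n / (1 - n)) • lmon α := by
  have h : ∀ i, lmon (Pi.single i 1) * lpd i (lmon α : Laurent K n) = (α i : K) • lmon α := by
    intro i
    rw [lpd_lmon, mul_smul_comm, lmon_mul, add_sub_cancel]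
  rw [lDelta, Finset.sum_congr rfl fun i _ => h i, add_smul, Finset.sum_smul]

theorem prod_lmon {ι : Type*} (s : Finset ι) (α : ι → Fin n → ℤ) :
    ∏ i ∈ s, (lmon (α i) : Laurent K n) = lmon (∑ i ∈ s, α i) := by
  simp [lmon]

theorem ljac_lmon (v : Fin n → Fin n → ℤ) :
    ljac (fun j => (lmon (v j) : Laurent K n)) =
      (Matrix.of fun i j => (v j i : K)).det • lmon (∑ j, v j - 1) := by
  set C : Matrix (Fin n) (Fin n) K := Matrix.of fun i j => (v j i : K)
  have hfactor : (Matrix.of fun i j => lpd i (lmon (v j) : Laurent K n)) =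
      Matrix.diagonal (fun i => lmon (-Pi.single i 1)) * C.map (algebraMap K _) *
        Matrix.diagonal (fun j => lmon (v j)) := by
    refine Matrix.ext fun i j => ?_
    rw [Matrix.mul_diagonal, Matrix.diagonal_mul, Matrix.of_apply, lpd_lmon, Matrix.map_apply,
      mul_comm (lmon _), mul_assoc, ← Algebra.smul_def, lmon_mul, neg_add_eq_sub]
    rfl
  have hsum : ∑ i : Fin n, -Pi.single i (1 : ℤ) = -1 := by
    rw [Finset.sum_neg_distrib, Finset.univ_sum_single]
    rfl
  rw [ljac, hfactor, Matrix.det_mul, Matrix.det_mul, Matrix.det_diagonal, Matrix.det_diagonal,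
    prod_lmon, prod_lmon, ← RingHom.mapMatrix_apply, ← RingHom.map_det, mul_right_comm, lmon_mul,
    mul_comm, ← Algebra.smul_def, hsum, neg_add_eq_sub]

theorem lDeltaLinear_compMultilinearMap_ljacMultilinear (h1n : (1 - n : K) ≠ 0) :
    (lDeltaLinear : Laurent K n →ₗ[K] _).compMultilinearMap ljacMultilinear = ∑ l : Fin n,
      ljacMultilinear.compLinearMap (Function.update (fun _ => LinearMap.id) l lDeltaLinear) := by
  refine Module.Basis.ext_multilinear (fun _ => lbasis) fun v => ?_
  have hdeg : ∑ i, (((∑ j, v j - 1) i : ℤ) : K) = ∑ l, ∑ i, (v l i : K) - n := by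
    simp only [Pi.sub_apply, Finset.sum_apply, Pi.one_apply, Int.cast_sub, Int.cast_sum,
      Int.cast_one, Finset.sum_sub_distrib, Finset.sum_const, Finset.card_univ, Fintype.card_fin,
      nsmul_one]
    rw [Finset.sum_comm]
  simp only [LinearMap.compMultilinearMap_apply, MultilinearMap.sum_compLinearMap_update_apply,
    lbasis_apply, lDeltaLinear_apply]
  have hupdate : ∀ l, ljacMultilinear (Function.update (fun i => lmon (v i)) l
      (lDelta (lmon (v l)))) = (∑ i, (v l i : K) + n / (1 - n)) •
        (Matrix.of fun i j => (v j i : K)).det • (lmon (∑ j, v j - 1) : Laurent K n) := by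
    intro l
    rw [lDelta_lmon, MultilinearMap.map_update_smul, Function.update_eq_self,
      ljacMultilinear_apply, ljac_lmon]
  rw [Finset.sum_congr rfl fun l _ => hupdate l, ljacMultilinear_apply, ljac_lmon,
    ← lDeltaLinear_apply, map_smul, lDeltaLinear_apply, lDelta_lmon, smul_comm, ← Finset.sum_smul,
    hdeg, Finset.sum_add_distrib, Finset.sum_const, Finset.card_univ, Fintype.card_fin,
    nsmul_eq_mul]
  congr 1
  have hc : n / (1 - n) * (1 - n) = (n : K) := div_mul_cancel₀ _ h1n
  linear_combination hc

end Laurent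

/-- For `n ≥ 2` and char `K = 0`, the map `Δ = Σ_i x_i ∂_i + n/(1−n)` is a derivation of the
`n`-Lie algebra `(K_n, Jac_n^S)`. -/
theorem lDelta_is_jacobian_derivation {K : Type*} [Field K] [CharZero K] {n : ℕ}
    (hn : 2 ≤ n) :
    ∀ u : Fin n → Laurent K n,
      lDelta (ljac u) = ∑ l : Fin n, ljac (Function.update u l (lDelta (u l))) := by
  intro u
  have h1n : (1 - n : K) ≠ 0 := sub_ne_zero.mpr (by exact_mod_cast (by omega : 1 ≠ n))
  have h := DFunLike.congr_fun (lDeltaLinear_compMultilinearMap_ljacMultilinear h1n) u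
  simpa only [LinearMap.compMultilinearMap_apply, MultilinearMap.sum_compLinearMap_update_apply,
    lDeltaLinear_apply, ljacMultilinear_apply] using h
end
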